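/- Let G be a connected graph with no isolated vertices, no leaves, and Δ(G) ≥ 1 (i.e., G is a cactus in the paper's terminology). Then for every two edges a, b of G there exists a bicycle subgraph of G containing both a and b. -/

import Mathlib

open scoped Classical

/-- A finite multigraph: loops and parallel edges allowed. -/
structure Multigraph where
  V : Type
  E : Type
  [fintypeV : Fintype V]
  [fintypeE : Fintype E]
  ends : E → Sym2 V

attribute [instance] Multigraph.fintypeV Multigraph.fintypeE

namespace Multigraph

variable (G : Multigraph)

/-- Vertex support of an edge set: vertices incident to some edge of `X`. -/
noncomputable def supp (X : Finset G.E) : Finset G.V :=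
  Finset.univ.filter (fun v => ∃ e ∈ X, v ∈ G.ends e)

/-- `Δ` of the subgraph induced by the edge set `X`. -/
noncomputable def delta (X : Finset G.E) : ℤ := (X.card : ℤ) - (G.supp X).card

/-- `Δ(G) = |E(G)| - |V(G)|`. -/
noncomputable def deltaG : ℤ := (Fintype.card G.E : ℤ) - (Fintype.card G.V : ℤ)

/-- Degree of `v` in the edge set `X`: loops count twice. -/
noncomputable def degIn (X : Finset G.E) (v : G.V) : ℕ :=
  ∑ e ∈ X, (if G.ends e = s(v, v) then 2 else if v ∈ G.ends e then 1 else 0)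

/-- `u` and `v` are joined by an edge of `X`. -/
def adjIn (X : Finset G.E) (u v : G.V) : Prop := ∃ e ∈ X, G.ends e = s(u, v)

/-- Reachability using only edges of `X`. -/
def reachIn (X : Finset G.E) : G.V → G.V → Prop :=
  Relation.ReflTransGen (G.adjIn X)

/-- The edge set `X` induces a connected subgraph. -/
def ConnSet (X : Finset G.E) : Prop :=
  X.Nonempty ∧ ∀ u ∈ G.supp X, ∀ v ∈ G.supp X, G.reachIn X u v

/-- Edges of the component of the subgraph `(V, X)` containing vertex `v`. -/
noncomputable def compEdges (X : Finset G.E) (v : G.V) : Finset G.E :=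
  X.filter (fun f => ∃ u ∈ G.ends f, G.reachIn X v u)

/-- Vertices of the component of `v` in the graph `(V, X)` (all vertices kept). -/
noncomputable def compVerts (X : Finset G.E) (v : G.V) : Finset G.V :=
  Finset.univ.filter (fun u => G.reachIn X v u)

/-- `C` is (the edge set of) a cycle: connected, every vertex of degree 2. -/
def IsCycleSet (C : Finset G.E) : Prop :=
  G.ConnSet C ∧ ∀ v ∈ G.supp C, G.degIn C v = 2

/-- `T` induces a tree. -/
def IsTreeSet (T : Finset G.E) : Prop := G.ConnSet T ∧ G.delta T = -1

/-- The component of `v` in `(V, X)` is a tree (possibly a single vertex). -/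
def IsTreeCompAt (X : Finset G.E) (v : G.V) : Prop :=
  (G.compEdges X v).card + 1 = (G.compVerts X v).card

/-- The number of tree components of the graph `(V, X)`. -/
noncomputable def treeCount (X : Finset G.E) : ℕ :=
  (((Finset.univ : Finset G.V).filter (fun v => G.IsTreeCompAt X v)).image
    (fun v => G.compVerts X v)).card

/-- The graph `G` has no isolated vertices. -/
def NoIso : Prop := ∀ v : G.V, ∃ e : G.E, v ∈ G.ends e

/-- The graph `G` has no leaves. -/
def NoLeaf : Prop := ∀ v : G.V, G.degIn Finset.univ v ≠ 1

/-- The graph `G` is connected. -/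
def GConn : Prop := Nonempty G.V ∧ ∀ u v : G.V, G.reachIn Finset.univ u v

/-- `G` is a bicycle: connected, leafless, with `Δ(G) = 1`. -/
def IsBicycle : Prop := G.GConn ∧ G.NoLeaf ∧ G.deltaG = 1

/-- One round of deleting all edges incident to a leaf. -/
noncomputable def pruneStep (X : Finset G.E) : Finset G.E :=
  X.filter (fun e => ∀ v ∈ G.ends e, G.degIn X v ≠ 1)

/-- Edge set obtained from `G` by repeatedly deleting leaves until none remain. -/
noncomputable def kernelSet : Finset G.E :=
  G.pruneStep^[Fintype.card G.E] Finset.univ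

/-- `Δ` of the component of `G` containing `v`. -/
noncomputable def compDelta (v : G.V) : ℤ :=
  ((G.compEdges Finset.univ v).card : ℤ) - ((G.compVerts Finset.univ v).card : ℤ)

/-- The core `[G]`: union of the kernels of the components `A` with `Δ(A) ≥ 1`. -/
noncomputable def coreSet : Finset G.E :=
  G.kernelSet.filter (fun e => ∀ v ∈ G.ends e, 1 ≤ G.compDelta v)

/-- `P` is the edge set of an `(x,y)`-path. -/
def IsPathSet (P : Finset G.E) (x y : G.V) : Prop :=
  G.ConnSet P ∧ x ≠ y ∧ x ∈ G.supp P ∧ y ∈ G.supp P ∧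
  G.degIn P x = 1 ∧ G.degIn P y = 1 ∧
  ∀ v ∈ G.supp P, v ≠ x → v ≠ y → G.degIn P v = 2

/-- `C` induces a bicycle subgraph: connected, leafless, `Δ = 1`. -/
def IsBicycleSet (C : Finset G.E) : Prop :=
  G.ConnSet C ∧ (∀ v ∈ G.supp C, G.degIn C v ≠ 1) ∧ G.delta C = 1

/-- Circuits of the `k`-circular matroid `M_k(G)`: minimal nonempty edge sets `C`
with `|C| = |V(G⟨C⟩)| + k`, i.e. `Δ(G⟨C⟩) = k`. -/
def IsCircuitSet (k : ℕ) (C : Finset G.E) : Prop :=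
  (C.Nonempty ∧ G.delta C = (k : ℤ)) ∧
  ∀ D ⊂ C, ¬ (D.Nonempty ∧ G.delta D = (k : ℤ))

/-- Independent sets of `M_k(G)`. -/
def Indep (k : ℕ) (I : Finset G.E) : Prop := ∀ C ⊆ I, ¬ G.IsCircuitSet k C

/-- Bases of `M_k(G)`: maximal independent sets. -/
def IsBase (k : ℕ) (B : Finset G.E) : Prop :=
  G.Indep k B ∧ ∀ B' : Finset G.E, G.Indep k B' → B ⊆ B' → B' = B

/-- The matroid `M_k(G)` is connected: at least two elements and every two
elements lie on a common circuit. -/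
def MConn (k : ℕ) : Prop :=
  2 ≤ Fintype.card G.E ∧
  ∀ a b : G.E, ∃ C : Finset G.E, G.IsCircuitSet k C ∧ a ∈ C ∧ b ∈ C

end Multigraph

/-!
Grow a connected edge set `X` one edge at a time, keeping the potential `Δ(X) + #leaves(X)` at
most `1`. Adding an edge at a leaf never increases the potential, and adding any edge with an
endpoint in `X` increases it by at most one. While `X` has a leaf we extend it there, which is
possible because `G` has none; when `X` is leafless but not a bicycle, `Δ(X) ≤ 0 < Δ(G)`, so
some edge of `G` leaves `X` and may be added. The process ends at a bicycle.

To start with `a` and `b` in `X`, let `X` be `b` together with a shortest path from an endpoint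
`y` of `a` to `b`. Not counting the leaf `y`, its potential is at most `0`, so adding `a` at `y`
keeps the potential at most `1`.
-/

namespace Multigraph

open Finset

variable {G : Multigraph} {X : Finset G.E} {e : G.E} {u v y : G.V}

noncomputable def incidence (G : Multigraph) (e : G.E) (v : G.V) : ℕ :=
  if G.ends e = s(v, v) then 2 else if v ∈ G.ends e then 1 else 0

theorem degIn_eq_sum_incidence (X : Finset G.E) (v : G.V) :
    G.degIn X v = ∑ e ∈ X, G.incidence e v := rfl

theorem incidence_eq_zero_iff : G.incidence e v = 0 ↔ v ∉ G.ends e := by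
  unfold incidence
  split_ifs with hloop <;> simp_all

theorem degIn_insert (he : e ∉ X) (v : G.V) :
    G.degIn (insert e X) v = G.incidence e v + G.degIn X v := by
  simp only [degIn_eq_sum_incidence, sum_insert he]

theorem degIn_mono {Y : Finset G.E} (h : X ⊆ Y) (v : G.V) : G.degIn X v ≤ G.degIn Y v :=
  sum_le_sum_of_subset h

theorem mem_supp_iff_degIn_ne_zero : v ∈ G.supp X ↔ G.degIn X v ≠ 0 := by
  simp [supp, degIn_eq_sum_incidence, sum_eq_zero_iff, incidence_eq_zero_iff]

theorem mem_supp : v ∈ G.supp X ↔ ∃ e ∈ X, v ∈ G.ends e := by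
  simp [supp]

theorem mem_supp_insert : v ∈ G.supp (insert e X) ↔ v ∈ G.ends e ∨ v ∈ G.supp X := by
  simp [supp]

theorem supp_mono {Y : Finset G.E} (h : X ⊆ Y) : G.supp X ⊆ G.supp Y := fun _ hv =>
  let ⟨e, he, hv⟩ := mem_supp.1 hv
  mem_supp.2 ⟨e, h he, hv⟩

theorem exists_mem_ends (e : G.E) : ∃ v, v ∈ G.ends e := ⟨_, Sym2.out_fst_mem _⟩

theorem exists_notMem_of_degIn_lt (h : G.degIn X v < G.degIn univ v) :
    ∃ e ∉ X, v ∈ G.ends e := by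
  by_contra! hX
  refine h.ne (sum_subset (subset_univ X) fun e _ he => ?_)
  exact incidence_eq_zero_iff.2 (hX e he)

theorem reachIn_symm (h : G.reachIn X u v) : G.reachIn X v u :=
  have : Std.Symm (G.adjIn X) := ⟨fun _ _ ⟨e, he, hends⟩ => ⟨e, he, hends.trans Sym2.eq_swap⟩⟩
  symm_of (Relation.ReflTransGen (G.adjIn X)) h

theorem reachIn_of_mem_ends (he : e ∈ X) (hu : u ∈ G.ends e) (hv : v ∈ G.ends e) :
    G.reachIn X u v := by
  by_cases huv : u = v
  · exact huv ▸ Relation.ReflTransGen.refl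
  · exact .single ⟨e, he, (Sym2.mem_and_mem_iff huv).1 ⟨hu, hv⟩⟩

theorem reachIn_mono {Y : Finset G.E} (h : X ⊆ Y) (hXuv : G.reachIn X u v) : G.reachIn Y u v :=
  Relation.ReflTransGen.mono (r := G.adjIn X) (fun _ _ ⟨f, hf, hends⟩ => ⟨f, h hf, hends⟩) u v hXuv

theorem connSet_singleton (e : G.E) : G.ConnSet {e} :=
  ⟨singleton_nonempty e, fun _ hu _ hw => by
    simp only [mem_supp, mem_singleton, exists_eq_left] at hu hw
    exact reachIn_of_mem_ends (mem_singleton_self e) hu hw⟩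

theorem connSet_insert (hX : G.ConnSet X) (hv : v ∈ G.ends e) (hvX : v ∈ G.supp X) :
    G.ConnSet (insert e X) := by
  have hreach : ∀ w ∈ G.supp (insert e X), G.reachIn (insert e X) w v := fun w hw => by
    rcases mem_supp_insert.1 hw with hw | hw
    · exact reachIn_of_mem_ends (mem_insert_self e X) hw hv
    · exact reachIn_mono (subset_insert e X) (hX.2 w hw v hvX)
  exact ⟨insert_nonempty e X, fun w hw w' hw' => (hreach w hw).trans (reachIn_symm (hreach w' hw'))⟩

theorem exists_edge_at_supp (hconn : G.GConn) (hX : X.Nonempty) (hlt : G.delta X < G.deltaG) :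
    ∃ e ∉ X, ∃ v ∈ G.ends e, v ∈ G.supp X := by
  by_contra! hclosed
  have hreach : ∀ u w, G.reachIn univ u w → u ∈ G.supp X → w ∈ G.supp X := by
    intro u w h hu
    induction h with
    | refl => exact hu
    | tail _ hadj ih =>
      obtain ⟨f, -, hends⟩ := hadj
      have hf : f ∈ X := by
        by_contra hf
        exact hclosed f hf _ (hends ▸ Sym2.mem_mk_left _ _) ih
      exact mem_supp.2 ⟨f, hf, hends ▸ Sym2.mem_mk_right _ _⟩
  obtain ⟨f, hf⟩ := hX
  obtain ⟨u, hu⟩ := exists_mem_ends f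
  have hsupp : G.supp X = univ := eq_univ_of_forall fun w =>
    hreach u w (hconn.2 u w) (mem_supp.2 ⟨f, hf, hu⟩)
  have hXuniv : X = univ := eq_univ_of_forall fun f => by
    by_contra hf
    obtain ⟨w, hw⟩ := exists_mem_ends f
    exact hclosed f hf w hw (hsupp ▸ mem_univ w)
  subst hXuniv
  simp [delta, deltaG, hsupp] at hlt

noncomputable def leaves (G : Multigraph) (X : Finset G.E) : Finset G.V :=
  univ.filter fun v => G.degIn X v = 1

theorem mem_leaves : v ∈ G.leaves X ↔ G.degIn X v = 1 := by
  simp [leaves]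

noncomputable def potential (G : Multigraph) (X : Finset G.E) : ℤ :=
  G.delta X + #(G.leaves X)

noncomputable def potentialAt (G : Multigraph) (X : Finset G.E) (y : G.V) : ℤ :=
  G.delta X + #((G.leaves X).erase y)

theorem potential_le_potentialAt_add_one (X : Finset G.E) (y : G.V) :
    G.potential X ≤ G.potentialAt X y + 1 := by
  have := pred_card_le_card_erase (s := G.leaves X) (a := y)
  unfold potential potentialAt
  omega

theorem leaves_insert_subset (he : e ∉ X) (hv : v ∈ G.ends e) :
    G.leaves (insert e X) ⊆ (G.leaves X).erase v ∪ (G.supp (insert e X) \ G.supp X) := by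
  intro p hp
  rw [mem_leaves, degIn_insert he] at hp
  by_cases hpX : p ∈ G.supp X
  · have hpX' := mem_supp_iff_degIn_ne_zero.1 hpX
    have hpe : G.incidence e p = 0 := by omega
    refine mem_union_left _ (mem_erase.2 ⟨?_, mem_leaves.2 (by omega)⟩)
    rintro rfl
    exact incidence_eq_zero_iff.1 hpe hv
  · exact mem_union_right _ (mem_sdiff.2 ⟨mem_supp_iff_degIn_ne_zero.2 (by
      rw [degIn_insert he]; omega), hpX⟩)

theorem card_supp_insert (X : Finset G.E) (e : G.E) :
    #(G.supp (insert e X)) = #(G.supp (insert e X) \ G.supp X) + #(G.supp X) :=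
  (card_sdiff_add_card_eq_card (supp_mono (subset_insert e X))).symm

theorem potential_insert_le (he : e ∉ X) (hv : v ∈ G.ends e) :
    G.potential (insert e X) ≤ G.potentialAt X v + 1 := by
  have hleaves := card_le_card (leaves_insert_subset he hv)
  have hunion := card_union_le ((G.leaves X).erase v) (G.supp (insert e X) \ G.supp X)
  have hsupp := card_supp_insert X e
  have hcard := card_insert_of_notMem he
  unfold potential potentialAt delta
  omega

theorem potentialAt_insert_le (hv : v ∈ G.ends e) (hy : y ∈ G.supp (insert e X) \ G.supp X) :
    G.potentialAt (insert e X) y ≤ G.potentialAt X v := by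
  have he : e ∉ X := fun he => by simp [insert_eq_of_mem he] at hy
  have hleaves := card_le_card (erase_subset_erase y (leaves_insert_subset he hv))
  have hunion := card_union_le ((G.leaves X).erase v) (G.supp (insert e X) \ G.supp X)
  have hyU := mem_union_right ((G.leaves X).erase v) hy
  have herase := card_erase_add_one hyU
  have hsupp := card_supp_insert X e
  have hcard := card_insert_of_notMem he
  unfold potentialAt delta
  omega

theorem exists_insert_potential_le (hconn : G.GConn) (hnl : G.NoLeaf) (hδ : 1 ≤ G.deltaG)
    (hX : G.ConnSet X) (hpot : G.potential X ≤ 1) (hbi : ¬ G.IsBicycleSet X) :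
    ∃ e ∉ X, G.ConnSet (insert e X) ∧ G.potential (insert e X) ≤ 1 := by
  suffices h : ∃ e ∉ X, ∃ v ∈ G.ends e, v ∈ G.supp X ∧ G.potentialAt X v ≤ 0 by
    obtain ⟨e, he, v, hv, hvX, hpotv⟩ := h
    exact ⟨e, he, connSet_insert hX hv hvX, by linarith [potential_insert_le he hv]⟩
  by_cases hleaf : ∃ v, G.degIn X v = 1
  · obtain ⟨v, hv⟩ := hleaf
    have hlt : G.degIn X v < G.degIn univ v := by
      have := degIn_mono (subset_univ X) v
      have := hnl v
      omega
    obtain ⟨e, he, hve⟩ := exists_notMem_of_degIn_lt hlt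
    have herase := card_erase_add_one (mem_leaves.2 hv)
    refine ⟨e, he, v, hve, mem_supp_iff_degIn_ne_zero.2 (by omega), ?_⟩
    unfold potential potentialAt at *
    omega
  · simp only [not_exists] at hleaf
    have hleaves : G.leaves X = ∅ := filter_eq_empty_iff.2 fun v _ => hleaf v
    have hdelta : G.delta X ≠ 1 := fun h => hbi ⟨hX, fun v _ => hleaf v, h⟩
    simp only [potential, hleaves, card_empty, Nat.cast_zero, add_zero] at hpot
    obtain ⟨e, he, v, hve, hvX⟩ := exists_edge_at_supp hconn hX.1 (by omega)
    refine ⟨e, he, v, hve, hvX, ?_⟩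
    simp only [potentialAt, hleaves, erase_empty, card_empty, Nat.cast_zero, add_zero]
    omega

theorem exists_isBicycleSet_superset (hconn : G.GConn) (hnl : G.NoLeaf) (hδ : 1 ≤ G.deltaG)
    (hX : G.ConnSet X) (hpot : G.potential X ≤ 1) : ∃ C, X ⊆ C ∧ G.IsBicycleSet C := by
  revert hX hpot
  refine strongDownwardInductionOn (n := Fintype.card G.E)
    (p := fun X => G.ConnSet X → G.potential X ≤ 1 → ∃ C, X ⊆ C ∧ G.IsBicycleSet C)
    X (fun X ih _ hX hpot => ?_) (card_le_univ X)
  by_cases hbi : G.IsBicycleSet X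
  · exact ⟨X, Subset.rfl, hbi⟩
  obtain ⟨e, he, hXe, hpote⟩ := exists_insert_potential_le hconn hnl hδ hX hpot hbi
  obtain ⟨C, hC, hbiC⟩ := ih (card_le_univ _) (ssubset_insert he) hXe hpote
  exact ⟨C, (subset_insert e X).trans hC, hbiC⟩

noncomputable def ball (G : Multigraph) (b : G.E) : ℕ → Finset G.V
  | 0 => G.supp {b}
  | n + 1 => G.ball b n ∪ univ.filter fun y => ∃ y' ∈ G.ball b n, G.adjIn univ y y'

theorem exists_mem_ball (hconn : G.GConn) (b : G.E) (y : G.V) : ∃ n, y ∈ G.ball b n := by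
  obtain ⟨u, hu⟩ := exists_mem_ends b
  induction hconn.2 y u using Relation.ReflTransGen.head_induction_on with
  | refl => exact ⟨0, mem_supp.2 ⟨b, mem_singleton_self b, hu⟩⟩
  | head hadj _ ih =>
    obtain ⟨n, hn⟩ := ih
    exact ⟨n + 1, mem_union_right _ (mem_filter.2 ⟨mem_univ _, _, hn, hadj⟩)⟩

/-- `X` is built as a shortest path from `y` to `b`, together with `b`. -/
theorem exists_connSet_potentialAt_nonpos (b : G.E) (n : ℕ) (hy : y ∈ G.ball b n) :
    ∃ X, b ∈ X ∧ G.ConnSet X ∧ G.supp X ⊆ G.ball b n ∧ y ∈ G.supp X ∧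
      G.potentialAt X y ≤ 0 := by
  induction n generalizing y with
  | zero =>
    have hyb : y ∈ G.ends b := by simpa [ball, mem_supp] using hy
    have hy' : y ∈ G.supp (insert b ∅) \ G.supp ∅ := by simpa [supp] using hyb
    refine ⟨{b}, mem_singleton_self b, connSet_singleton b, Subset.rfl, hy, ?_⟩
    simpa [potentialAt, delta, leaves, degIn, supp] using potentialAt_insert_le hyb hy'
  | succ n ih =>
    by_cases hyn : y ∈ G.ball b n
    · obtain ⟨X, hbX, hX, hXn, hyX, hpot⟩ := ih hyn
      exact ⟨X, hbX, hX, hXn.trans subset_union_left, hyX, hpot⟩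
    obtain ⟨y', hy', e, -, he⟩ : ∃ y' ∈ G.ball b n, G.adjIn univ y y' := by
      simpa [ball, hyn] using hy
    obtain ⟨X, hbX, hX, hXn, hy'X, hpot⟩ := ih hy'
    have hy'e : y' ∈ G.ends e := he ▸ Sym2.mem_mk_right y y'
    have hnew : y ∈ G.supp (insert e X) \ G.supp X :=
      mem_sdiff.2 ⟨mem_supp_insert.2 (.inl (he ▸ Sym2.mem_mk_left y y')), fun h => hyn (hXn h)⟩
    refine ⟨insert e X, mem_insert_of_mem hbX, connSet_insert hX hy'e hy'X, fun w hw => ?_,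
      (mem_sdiff.1 hnew).1, (potentialAt_insert_le hy'e hnew).trans hpot⟩
    rcases mem_supp_insert.1 hw with hw | hw
    · rcases Sym2.mem_iff.1 (he ▸ hw) with rfl | rfl
      · exact hy
      · exact mem_union_left _ hy'
    · exact mem_union_left _ (hXn hw)

end Multigraph

/-- In a connected leafless graph `G` with `Δ(G) ≥ 1` (a cactus), every two
edges lie on a common bicycle subgraph. -/
theorem stmt_8 (G : Multigraph) (hconn : G.GConn) (hnl : G.NoLeaf)
    (hδ : 1 ≤ G.deltaG) :
    ∀ a b : G.E, ∃ C : Finset G.E, a ∈ C ∧ b ∈ C ∧ G.IsBicycleSet C := by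
  intro a b
  obtain ⟨y, hya⟩ := Multigraph.exists_mem_ends a
  obtain ⟨n, hy⟩ := Multigraph.exists_mem_ball hconn b y
  obtain ⟨X, hbX, hX, -, hyX, hpot⟩ := Multigraph.exists_connSet_potentialAt_nonpos b n hy
  have hstart : G.ConnSet (insert a X) ∧ G.potential (insert a X) ≤ 1 := by
    by_cases haX : a ∈ X
    · rw [Finset.insert_eq_of_mem haX]
      exact ⟨hX, by linarith [Multigraph.potential_le_potentialAt_add_one X y]⟩
    · exact ⟨Multigraph.connSet_insert hX hya hyX,
        by linarith [Multigraph.potential_insert_le haX hya]⟩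
  obtain ⟨C, hXC, hC⟩ := Multigraph.exists_isBicycleSet_superset hconn hnl hδ hstart.1 hstart.2
  exact ⟨C, hXC (Finset.mem_insert_self a X), hXC (Finset.mem_insert_of_mem hbX), hC⟩
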